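/- In the common knowledge semantics of ATL*, the common knowledge operator is definable: (G, h) ⊨_ck C_A φ if and only if (G, h) ⊨_ck ⟨⟨A⟩⟩ (φ U φ). -/

import Mathlib

/-!
For `⟨⟨A⟩⟩ (φ U φ)` only the current position `|h|` matters, since `φ U φ` holds at a position
iff `φ` does. Every common-knowledge outcome of a strategy passes, at time `|h|`, through a
history of the common-knowledge neighbourhood `C_A(h)` (all its members have the length of `h`),
and conversely every history of `C_A(h)` is the prefix of some objective outcome, because
transitions are serial. Hence for any uniform strategy, `⟨⟨A⟩⟩ (φ U φ)` with that strategy says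
exactly that `φ` holds throughout `C_A(h)`, and uniform strategies exist since agents can always
play a fixed enabled action of the (observationally invariant) protocol.
-/

/-- A concurrent game structure with imperfect information (iCGS). -/
structure iCGS (Ag S Act AP : Type) where
  init : S
  obs : Ag → S → S → Prop
  obsEquiv : ∀ i, Equivalence (obs i)
  protocol : Ag → S → Set Act
  protNe : ∀ i s, (protocol i s).Nonempty
  protObs : ∀ i s s', obs i s s' → protocol i s = protocol i s'
  trans : S → (Ag → Act) → S → Prop
  transSerial : ∀ s α, (∀ i, α i ∈ protocol i s) → ∃ s', trans s α s'
  label : S → Set AP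

/-- A history: an initial state followed by a finite list of (joint action, state) steps. -/
structure Hist (Ag S Act : Type) where
  start : S
  steps : List ((Ag → Act) × S)

variable {Ag S Act AP S' Act' : Type}

/-- The last state of a history. -/
def histLast (h : Hist Ag S Act) : S :=
  (h.steps.getLast?.map Prod.snd).getD h.start

/-- Synchronous extension of agent `i`'s indistinguishability relation to histories:
same length (enforced by `Forall₂`), pointwise indistinguishable states, and the
same actions of agent `i` at every step. -/
def indist (G : iCGS Ag S Act AP) (i : Ag) (h h' : Hist Ag S Act) : Prop :=
  G.obs i h.start h'.start ∧
    List.Forall₂ (fun p q => p.1 i = q.1 i ∧ G.obs i p.2 q.2) h.steps h'.steps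
/-- The common knowledge relation of a coalition `A`: transitive closure of the
union of the individual indistinguishability relations. -/
def ckRel (G : iCGS Ag S Act AP) (A : Set Ag) :
    Hist Ag S Act → Hist Ag S Act → Prop :=
  Relation.TransGen (fun h h' => ∃ i ∈ A, indist G i h h')

/-- The common knowledge neighbourhood of a history `h` for coalition `A`. -/
def CKN (G : iCGS Ag S Act AP) (A : Set Ag) (h : Hist Ag S Act) :
    Set (Hist Ag S Act) :=
  { h' | ckRel G A h' h }
/-- An infinite path: a start state and an infinite sequence of (joint action, state) steps. -/
structure GPath (Ag S Act : Type) where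
  start : S
  steps : ℕ → (Ag → Act) × S

/-- The prefix of a path of length `j` (i.e. with `j` steps), as a history. -/
def pathPrefix (lam : GPath Ag S Act) (j : ℕ) : Hist Ag S Act :=
  ⟨lam.start, (List.range j).map lam.steps⟩

/-- A (joint) uniform memoryful strategy for coalition `A`: each agent of `A` plays
enabled actions and acts identically on indistinguishable histories. -/
def IsUniformStrat (G : iCGS Ag S Act AP) (A : Set Ag)
    (σ : Ag → Hist Ag S Act → Act) : Prop :=
  ∀ i ∈ A, (∀ h, σ i h ∈ G.protocol i (histLast h)) ∧
    ∀ h h', indist G i h h' → σ i h = σ i h'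

/-- Objective outcomes of strategy `σ` (for coalition `A`) at history `h`. -/
def outObj (G : iCGS Ag S Act AP) (A : Set Ag) (h : Hist Ag S Act)
    (σ : Ag → Hist Ag S Act → Act) : Set (GPath Ag S Act) :=
  { lam | pathPrefix lam h.steps.length = h ∧
      ∀ j, h.steps.length ≤ j →
        (∀ i ∈ A, (lam.steps j).1 i = σ i (pathPrefix lam j)) ∧
        G.trans (histLast (pathPrefix lam j)) (lam.steps j).1 (lam.steps j).2 }

/-- Subjective outcomes of strategy `σ` at history `h`. -/
def outSubj (G : iCGS Ag S Act AP) (A : Set Ag) (h : Hist Ag S Act)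
    (σ : Ag → Hist Ag S Act → Act) : Set (GPath Ag S Act) :=
  { lam | ∃ i ∈ A, ∃ h', indist G i h' h ∧ lam ∈ outObj G A h' σ }

/-- Common knowledge outcomes of strategy `σ` at history `h`. -/
def outCk (G : iCGS Ag S Act AP) (A : Set Ag) (h : Hist Ag S Act)
    (σ : Ag → Hist Ag S Act → Act) : Set (GPath Ag S Act) :=
  { lam | ∃ h' ∈ CKN G A h, lam ∈ outObj G A h' σ }
mutual
/-- History formulas of ATL*. -/
inductive HForm (AP Ag : Type) : Type
  | atom : AP → HForm AP Ag
  | neg : HForm AP Ag → HForm AP Ag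
  | imp : HForm AP Ag → HForm AP Ag → HForm AP Ag
  | coal : Set Ag → PForm AP Ag → HForm AP Ag

/-- Path formulas of ATL*. -/
inductive PForm (AP Ag : Type) : Type
  | hist : HForm AP Ag → PForm AP Ag
  | neg : PForm AP Ag → PForm AP Ag
  | imp : PForm AP Ag → PForm AP Ag → PForm AP Ag
  | next : PForm AP Ag → PForm AP Ag
  | yest : PForm AP Ag → PForm AP Ag
  | until : PForm AP Ag → PForm AP Ag → PForm AP Ag
end

mutual
/-- Common knowledge satisfaction of history formulas. -/
def satH (G : iCGS Ag S Act AP) : Hist Ag S Act → HForm AP Ag → Prop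
  | h, .atom p => p ∈ G.label (histLast h)
  | h, .neg φ => ¬ satH G h φ
  | h, .imp φ ψ => satH G h φ → satH G h ψ
  | h, .coal A ψ => ∃ σ, IsUniformStrat G A σ ∧
      ∀ lam ∈ outCk G A h σ, satP G lam h.steps.length ψ

/-- Common knowledge satisfaction of path formulas. -/
def satP (G : iCGS Ag S Act AP) : GPath Ag S Act → ℕ → PForm AP Ag → Prop
  | lam, m, .hist φ => satH G (pathPrefix lam m) φ
  | lam, m, .neg ψ => ¬ satP G lam m ψ
  | lam, m, .imp ψ ψ' => satP G lam m ψ → satP G lam m ψ'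
  | lam, m, .next ψ => satP G lam (m + 1) ψ
  | lam, m, .yest ψ => 1 ≤ m ∧ satP G lam (m - 1) ψ
  | lam, m, .until ψ ψ' => ∃ j, m ≤ j ∧ satP G lam j ψ' ∧
      ∀ k, m ≤ k → k < j → satP G lam k ψ
end

mutual
/-- `A`-formulas: history formulas whose only coalition is `A`. -/
def AFormH (A : Set Ag) : HForm AP Ag → Prop
  | .atom _ => True
  | .neg φ => AFormH A φ
  | .imp φ ψ => AFormH A φ ∧ AFormH A ψ
  | .coal B ψ => B = A ∧ AFormP A ψ

/-- `A`-formulas: path formulas whose only coalition is `A`. -/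
def AFormP (A : Set Ag) : PForm AP Ag → Prop
  | .hist φ => AFormH A φ
  | .neg ψ => AFormP A ψ
  | .imp ψ ψ' => AFormP A ψ ∧ AFormP A ψ'
  | .next ψ => AFormP A ψ
  | .yest ψ => AFormP A ψ
  | .until ψ ψ' => AFormP A ψ ∧ AFormP A ψ'
end


lemma indist.length_eq {G : iCGS Ag S Act AP} {i : Ag} {h h' : Hist Ag S Act}
    (hi : indist G i h h') : h.steps.length = h'.steps.length :=
  hi.2.length_eq

lemma ckRel.length_eq {G : iCGS Ag S Act AP} {A : Set Ag} {h h' : Hist Ag S Act}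
    (hck : ckRel G A h h') : h.steps.length = h'.steps.length := by
  induction hck with
  | single hstep => obtain ⟨i, -, hi⟩ := hstep; exact hi.length_eq
  | tail _ hstep ih => obtain ⟨i, -, hi⟩ := hstep; exact ih.trans hi.length_eq

lemma histLast_rel {R : S → S → Prop} {h h' : Hist Ag S Act} (hstart : R h.start h'.start)
    (hsteps : List.Forall₂ (fun p q => R p.2 q.2) h.steps h'.steps) :
    R (histLast h) (histLast h') := by
  obtain ⟨s, l⟩ := h
  obtain ⟨s', l'⟩ := h'
  simp only [histLast] at *
  induction hsteps generalizing s s' with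
  | nil => exact hstart
  | cons hpq _ ih =>
    rw [List.getLast?_cons, List.getLast?_cons, Option.map_some, Option.map_some,
      Option.getD_some, Option.getD_some, ← Option.getD_map Prod.snd,
      ← Option.getD_map Prod.snd]
    exact ih _ _ hpq

lemma indist.obs_histLast {G : iCGS Ag S Act AP} {i : Ag} {h h' : Hist Ag S Act}
    (hi : indist G i h h') : G.obs i (histLast h) (histLast h') :=
  histLast_rel hi.1 (hi.2.imp fun _ _ hpq => hpq.2)

lemma exists_isUniformStrat (G : iCGS Ag S Act AP) (A : Set Ag) :
    ∃ σ, IsUniformStrat G A σ := by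
  refine ⟨fun i g => (G.protNe i (histLast g)).some, fun i _ => ⟨fun g => Set.Nonempty.some_mem _,
    fun g g' hi => ?_⟩⟩
  simp only [G.protObs i _ _ hi.obs_histLast]

lemma iCGS.exists_trans_of_mem_protocol (G : iCGS Ag S Act AP) {A : Set Ag} {s : S}
    {a : Ag → Act} (ha : ∀ i ∈ A, a i ∈ G.protocol i s) :
    ∃ p : (Ag → Act) × S, (∀ i ∈ A, p.1 i = a i) ∧ G.trans s p.1 p.2 := by
  classical
  let α : Ag → Act := fun i => if i ∈ A then a i else (G.protNe i s).some
  have hα : ∀ i, α i ∈ G.protocol i s := by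
    intro i
    by_cases hi : i ∈ A
    · simpa [α, hi] using ha i hi
    · simpa [α, hi] using (G.protNe i s).some_mem
  obtain ⟨s', hs'⟩ := G.transSerial s α hα
  exact ⟨(α, s'), fun i hi => if_pos hi, hs'⟩

def extendSteps (h : Hist Ag S Act) (next : Hist Ag S Act → (Ag → Act) × S) (j : ℕ) :
    (Ag → Act) × S :=
  if hj : j < h.steps.length then h.steps[j]
  else next ⟨h.start, (List.range j).attach.map fun k => extendSteps h next k.1⟩
termination_by j
decreasing_by exact List.mem_range.mp k.2

def extendPath (h : Hist Ag S Act) (next : Hist Ag S Act → (Ag → Act) × S) : GPath Ag S Act :=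
  ⟨h.start, extendSteps h next⟩

lemma extendSteps_of_lt {h : Hist Ag S Act} {next : Hist Ag S Act → (Ag → Act) × S} {j : ℕ}
    (hj : j < h.steps.length) : extendSteps h next j = h.steps[j] := by
  rw [extendSteps, dif_pos hj]

lemma extendPath_steps_of_le {h : Hist Ag S Act} {next : Hist Ag S Act → (Ag → Act) × S}
    {j : ℕ} (hj : h.steps.length ≤ j) :
    (extendPath h next).steps j = next (pathPrefix (extendPath h next) j) := by
  change extendSteps h next j = _
  rw [extendSteps, dif_neg (not_lt.mpr hj)]
  simp only [pathPrefix, List.map_attach_eq_pmap, List.pmap_eq_map]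
  rfl

lemma pathPrefix_extendPath (h : Hist Ag S Act) (next : Hist Ag S Act → (Ag → Act) × S) :
    pathPrefix (extendPath h next) h.steps.length = h := by
  obtain ⟨s, l⟩ := h
  simp only [pathPrefix, extendPath, Hist.mk.injEq, true_and]
  refine List.ext_getElem (by simp) fun j hj _ => ?_
  simp only [List.getElem_map, List.getElem_range]
  exact extendSteps_of_lt (by simpa using hj)

lemma outObj_nonempty {G : iCGS Ag S Act AP} {A : Set Ag} {σ : Ag → Hist Ag S Act → Act}
    (hσ : ∀ i ∈ A, ∀ g, σ i g ∈ G.protocol i (histLast g)) (h : Hist Ag S Act) :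
    (outObj G A h σ).Nonempty := by
  choose next hnext using fun g => G.exists_trans_of_mem_protocol (hσ · · g)
  refine ⟨extendPath h next, pathPrefix_extendPath h next, fun j hj => ?_⟩
  rw [extendPath_steps_of_le hj]
  exact hnext _

lemma image_pathPrefix_outCk {G : iCGS Ag S Act AP} {A : Set Ag} {σ : Ag → Hist Ag S Act → Act}
    (hσ : ∀ i ∈ A, ∀ g, σ i g ∈ G.protocol i (histLast g)) (h : Hist Ag S Act) :
    (pathPrefix · h.steps.length) '' outCk G A h σ = CKN G A h := by
  ext h'
  constructor
  · rintro ⟨lam, ⟨h'', hck, hlam⟩, rfl⟩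
    dsimp only
    rwa [← ckRel.length_eq hck, hlam.1]
  · intro hck
    obtain ⟨lam, hlam⟩ := outObj_nonempty hσ h'
    exact ⟨lam, ⟨h', hck, hlam⟩, by dsimp only; rw [← ckRel.length_eq hck, hlam.1]⟩

lemma satP_until_self_iff {G : iCGS Ag S Act AP} {lam : GPath Ag S Act} {m : ℕ}
    {ψ : PForm AP Ag} : satP G lam m (.until ψ ψ) ↔ satP G lam m ψ := by
  refine ⟨fun ⟨j, hmj, hj, hbefore⟩ => ?_, fun hm => ⟨m, le_rfl, hm, fun k hk hk' => ?_⟩⟩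
  · rcases hmj.eq_or_lt with rfl | hlt
    · exact hj
    · exact hbefore m le_rfl hlt
  · exact absurd hk' (not_lt.mpr hk)

/-- in the common knowledge semantics, the common knowledge
operator `C_A` is definable: `C_A φ` holds at `h` iff `⟨⟨A⟩⟩ (φ U φ)` does. -/
theorem common_knowledge_definable (G : iCGS Ag S Act AP) (A : Set Ag)
    (h : Hist Ag S Act) (φ : HForm AP Ag) :
    (∀ h' ∈ CKN G A h, satH G h' φ) ↔
      satH G h (HForm.coal A (PForm.until (PForm.hist φ) (PForm.hist φ))) := by
  have outcomes_iff : ∀ σ, IsUniformStrat G A σ →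
      ((∀ lam ∈ outCk G A h σ, satP G lam h.steps.length (.until (.hist φ) (.hist φ))) ↔
        ∀ h' ∈ CKN G A h, satH G h' φ) := by
    intro σ hσ
    rw [← image_pathPrefix_outCk (fun i hi => (hσ i hi).1) h, Set.forall_mem_image]
    simp only [satP_until_self_iff]
    rfl
  obtain ⟨σ₀, hσ₀⟩ := exists_isUniformStrat G A
  refine ⟨fun hC => ⟨σ₀, hσ₀, (outcomes_iff σ₀ hσ₀).2 hC⟩, ?_⟩
  rintro ⟨σ, hσ, hout⟩
  exact (outcomes_iff σ hσ).1 hout
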